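/- Suppose f ∈ C²([t0,t1)) (with t1 > t0) solves the ODE with the given initial data. Then for every t ∈ (t0,t1) the derivative f0(t) = ∂t f(t) satisfies 0 < f0(t) < −𝙱·△·t^((△+ā)/2 − 1)·(1+f(t))². -/

import Mathlib

/-!
Put `w = f / (1 + f)`. The equation becomes
`t² w'' + a t w' - b w = (c - 2) t² f'² / (1 + f)³`, and since `λ₋ + λ₊ = 1 - a`,
`λ₋ λ₊ = -b` for `λ± = (ā ± △) / 2`, the Euler operator on the left equals
`t ^ (λ₊ + 1) * (t ^ (-λ₊) * (t w' - λ₋ w))'`. So for `c ≤ 2` the quantity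
`t ^ (-λ₊) * (t w' - λ₋ w)` is nonincreasing; its value at `t0` is `-△ 𝙱`, and as `λ₋ < 0 < w`
this bounds `t w' = t f' / (1 + f)²`.
Positivity of `f'` comes first: at a first zero `τ` of `f'` the equation gives
`f''(τ) = b f (1 + f) / τ² > 0`, which is impossible after `f'` has been positive on `[t0, τ)`.
-/

open Real Set Filter Topology

section Regularity

variable {E : Type*} [NormedAddCommGroup E] [NormedSpace ℝ E] {f : ℝ → E} {a b t : ℝ}

theorem ContDiffOn.hasDerivAt_deriv {s : Set ℝ} (hf : ContDiffOn ℝ 2 f s) (hs : s ∈ 𝓝 t) :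
    HasDerivAt (deriv f) (deriv (deriv f) t) t :=
  (((hf.mono interior_subset).deriv_of_isOpen isOpen_interior (m := 1) le_rfl).differentiableOn
    one_ne_zero).differentiableAt (isOpen_interior.mem_nhds (mem_interior_iff_mem_nhds.2 hs))
    |>.hasDerivAt

theorem ContDiffOn.continuousOn_deriv_Ico (hf : ContDiffOn ℝ 1 f (Ico a b))
    (ha : DifferentiableAt ℝ f a) : ContinuousOn (deriv f) (Ico a b) := by
  refine (hf.continuousOn_derivWithin (uniqueDiffOn_Ico a b) le_rfl).congr fun t ht => ?_
  rcases ht.1.eq_or_lt with rfl | h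
  · exact (ha.derivWithin (uniqueDiffOn_Ico _ _ _ ht)).symm
  · exact (derivWithin_of_mem_nhds (Ico_mem_nhds h ht.2)).symm

end Regularity

theorem monotoneOn_of_contDiffOn_of_deriv_nonneg {D : Set ℝ} {f : ℝ → ℝ} (hD : Convex ℝ D)
    (hf : ContDiffOn ℝ 1 f D) (hf' : ∀ x ∈ D, 0 ≤ deriv f x) : MonotoneOn f D :=
  monotoneOn_of_deriv_nonneg hD hf.continuousOn
    ((hf.differentiableOn one_ne_zero).mono interior_subset) fun x hx => hf' x (interior_subset hx)

theorem ContinuousOn.exists_first_zero {u : ℝ → ℝ} {a b t : ℝ} (hu : ContinuousOn u (Ico a b))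
    (ha : 0 < u a) (ht : t ∈ Ico a b) (hut : u t ≤ 0) :
    ∃ τ ∈ Ioc a t, u τ = 0 ∧ ∀ s ∈ Ico a τ, 0 < u s := by
  set Z := Icc a t ∩ u ⁻¹' Iic 0
  have hsub : Icc a t ⊆ Ico a b := Icc_subset_Ico_right ht.2
  have hZ : IsClosed Z := (hu.mono hsub).preimage_isClosed_of_isClosed isClosed_Icc isClosed_Iic
  have hbdd : BddBelow Z := ⟨a, fun x hx => hx.1.1⟩
  have hτ : sInf Z ∈ Z := hZ.csInf_mem ⟨t, ⟨ht.1, le_rfl⟩, hut⟩ hbdd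
  set τ := sInf Z
  have hbefore : ∀ s ∈ Ico a τ, 0 < u s := fun s hs => by
    by_contra! hus
    exact hs.2.not_ge (csInf_le hbdd ⟨⟨hs.1, hs.2.le.trans hτ.1.2⟩, hus⟩)
  have haτ : a < τ := hτ.1.1.lt_of_ne fun h => (h ▸ ha).not_ge hτ.2
  have hclosure : closure (Ico a τ) = Icc a τ := closure_Ico haτ.ne
  refine ⟨τ, ⟨haτ, hτ.1.2⟩, le_antisymm hτ.2 ?_, hbefore⟩
  exact le_on_closure (fun s hs => (hbefore s hs).le) continuousOn_const
    (hclosure ▸ hu.mono (Icc_subset_Ico_right (hτ.1.2.trans_lt ht.2)))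
    (hclosure ▸ right_mem_Icc.2 haτ.le)

theorem HasDerivAt.nonpos_of_forall_Ioo_ge {u : ℝ → ℝ} {d a τ : ℝ} (hu : HasDerivAt u d τ)
    (ha : a < τ) (hge : ∀ x ∈ Ioo a τ, u τ ≤ u x) : d ≤ 0 := by
  refine le_of_tendsto (hasDerivAt_iff_tendsto_slope_left_right.mp hu).1 ?_
  filter_upwards [Ioo_mem_nhdsLT ha] with x hx
  rw [slope_def_field]
  exact div_nonpos_of_nonneg_of_nonpos (sub_nonneg.2 (hge x hx)) (sub_nonpos.2 hx.2.le)

theorem hasDerivAt_euler_factorization {w w' : ℝ → ℝ} {w'' a b lm lp t : ℝ} (ht : 0 < t)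
    (hsum : lm + lp = 1 - a) (hprod : lm * lp = -b)
    (hw : HasDerivAt w (w' t) t) (hw' : HasDerivAt w' w'' t) :
    HasDerivAt (fun s => s ^ (-lp) * (s * w' s - lm * w s))
      (t ^ (-lp - 1) * (t ^ 2 * w'' + a * t * w' t - b * w t)) t := by
  refine ((hasDerivAt_rpow_const (p := -lp) (Or.inl ht.ne')).mul
    (((hasDerivAt_id t).mul hw').sub (hw.const_mul lm))).congr_deriv ?_
  rw [rpow_sub_one ht.ne', show a = 1 - lm - lp by linarith, show b = -(lm * lp) by linarith]
  simp only [Pi.mul_apply, Pi.sub_apply, id_eq]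
  field_simp
  ring

theorem HasDerivAt.div_one_add {f : ℝ → ℝ} {f' t : ℝ} (hf : HasDerivAt f f' t)
    (h : 1 + f t ≠ 0) : HasDerivAt (fun s => f s / (1 + f s)) (f' / (1 + f t) ^ 2) t := by
  refine (hf.div (hf.const_add 1) h).congr_deriv ?_
  field_simp
  ring

theorem HasDerivAt.div_one_add_sq {f g : ℝ → ℝ} {f' g' t : ℝ} (hf : HasDerivAt f f' t)
    (hg : HasDerivAt g g' t) (h : 1 + f t ≠ 0) :
    HasDerivAt (fun s => g s / (1 + f s) ^ 2)
      (g' / (1 + f t) ^ 2 - 2 * g t * f' / (1 + f t) ^ 3) t := by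
  refine (hg.div ((hf.const_add 1).pow 2) (pow_ne_zero 2 h)).congr_deriv ?_
  simp only [Pi.pow_apply]
  field_simp
  ring

theorem ode_euler_identity {t F F' F'' a b c : ℝ} (ht : t ≠ 0) (hF : 1 + F ≠ 0)
    (hode : F'' + (a / t) * F' - (b / t ^ 2) * F * (1 + F) - (c / (1 + F)) * F' ^ 2 = 0) :
    t ^ 2 * (F'' / (1 + F) ^ 2 - 2 * F' * F' / (1 + F) ^ 3) + a * t * (F' / (1 + F) ^ 2)
      - b * (F / (1 + F)) = (c - 2) * t ^ 2 * F' ^ 2 / (1 + F) ^ 3 := by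
  have hF'' : F'' = -(a / t) * F' + (b / t ^ 2) * F * (1 + F) + (c / (1 + F)) * F' ^ 2 := by
    linear_combination hode
  rw [hF'']
  field_simp
  ring

/-- In terms of `w = f / (1 + f)` this is `t ^ (-λ₊) * (t * w' - λ₋ * w)`. -/
noncomputable def lyapunov (lm lp : ℝ) (f : ℝ → ℝ) (t : ℝ) : ℝ :=
  t ^ (-lp) * (t * (deriv f t / (1 + f t) ^ 2) - lm * (f t / (1 + f t)))

section ODE

variable {f : ℝ → ℝ} {t0 t1 a b c lm lp : ℝ}

theorem deriv_pos_of_ode (ht0 : 0 < t0) (hb : 0 < b) (hreg : ContDiffOn ℝ 2 f (Ico t0 t1))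
    (hf0 : 0 < f t0) (hf0' : 0 < deriv f t0)
    (hode : ∀ t ∈ Ioo t0 t1, deriv (deriv f) t + (a / t) * deriv f t
      - (b / t ^ 2) * f t * (1 + f t) - (c / (1 + f t)) * (deriv f t) ^ 2 = 0) :
    ∀ t ∈ Ico t0 t1, 0 < deriv f t := by
  by_contra! ⟨t, ht, hft⟩
  have hcont := (hreg.of_le one_le_two).continuousOn_deriv_Ico
    (differentiableAt_of_deriv_ne_zero hf0'.ne')
  obtain ⟨τ, hτ, hzero, hbefore⟩ := hcont.exists_first_zero hf0' ht hft
  have hτ1 : τ < t1 := hτ.2.trans_lt ht.2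
  have hfτ : f t0 ≤ f τ := by
    refine monotoneOn_of_contDiffOn_of_deriv_nonneg (convex_Icc t0 τ)
      (hreg.mono (Icc_subset_Ico_right hτ1) |>.of_le one_le_two) (fun x hx => ?_)
      (left_mem_Icc.2 hτ.1.le) (right_mem_Icc.2 hτ.1.le) hτ.1.le
    rcases hx.2.lt_or_eq with h | rfl
    · exact (hbefore x ⟨hx.1, h⟩).le
    · exact hzero.ge
  have hf'' : deriv (deriv f) τ = b / τ ^ 2 * f τ * (1 + f τ) := by
    have := hode τ ⟨hτ.1, hτ1⟩
    rw [hzero] at this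
    linear_combination this
  have hf''_pos : 0 < deriv (deriv f) τ := by
    rw [hf'']
    have : 0 < τ := ht0.trans hτ.1
    have : 0 < f τ := hf0.trans_le hfτ
    positivity
  have := (hreg.hasDerivAt_deriv (Ico_mem_nhds hτ.1 hτ1)).nonpos_of_forall_Ioo_ge
    hτ.1 fun x hx => hzero ▸ (hbefore x ⟨hx.1.le, hx.2⟩).le
  linarith

theorem antitoneOn_lyapunov (ht0 : 0 < t0) (hc : c ≤ 2) (hsum : lm + lp = 1 - a)
    (hprod : lm * lp = -b) (hreg : ContDiffOn ℝ 2 f (Ico t0 t1))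
    (hf0 : DifferentiableAt ℝ f t0) (hpos : ∀ t ∈ Ico t0 t1, 0 < 1 + f t)
    (hode : ∀ t ∈ Ioo t0 t1, deriv (deriv f) t + (a / t) * deriv f t
      - (b / t ^ 2) * f t * (1 + f t) - (c / (1 + f t)) * (deriv f t) ^ 2 = 0) :
    AntitoneOn (lyapunov lm lp f) (Ico t0 t1) := by
  have hne : ∀ t ∈ Ico t0 t1, t ≠ 0 := fun t ht => (ht0.trans_le ht.1).ne'
  have hcont : ContinuousOn (lyapunov lm lp f) (Ico t0 t1) := by
    have hf := hreg.continuousOn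
    have hf' := (hreg.of_le one_le_two).continuousOn_deriv_Ico hf0
    unfold lyapunov
    refine (continuousOn_id.rpow_const fun t ht => Or.inl (hne t ht)).mul
      ((continuousOn_id.mul (hf'.div ((continuousOn_const.add hf).pow 2) fun t ht => ?_)).sub
        (continuousOn_const.mul (hf.div (continuousOn_const.add hf) fun t ht => ?_)))
    · exact pow_ne_zero 2 (hpos t ht).ne'
    · exact (hpos t ht).ne'
  have hderiv : ∀ t ∈ Ioo t0 t1, HasDerivAt (lyapunov lm lp f)
      (t ^ (-lp - 1) * ((c - 2) * t ^ 2 * deriv f t ^ 2 / (1 + f t) ^ 3)) t := by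
    intro t ht
    have hnhds : Ico t0 t1 ∈ 𝓝 t := Ico_mem_nhds ht.1 ht.2
    have hf := ((hreg.differentiableOn two_ne_zero).differentiableAt hnhds).hasDerivAt
    have hne' := (hpos t (Ioo_subset_Ico_self ht)).ne'
    rw [← ode_euler_identity (hne t (Ioo_subset_Ico_self ht)) hne' (hode t ht)]
    exact hasDerivAt_euler_factorization (ht0.trans ht.1) hsum hprod (hf.div_one_add hne')
      (hf.div_one_add_sq (hreg.hasDerivAt_deriv hnhds) hne')
  refine antitoneOn_of_deriv_nonpos (convex_Ico t0 t1) hcont ?_ ?_ <;> rw [interior_Ico]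
  · exact fun t ht => (hderiv t ht).differentiableAt.differentiableWithinAt
  intro t ht
  rw [(hderiv t ht).deriv]
  have := hpos t (Ioo_subset_Ico_self ht)
  have hc2 : c - 2 ≤ 0 := by linarith
  exact mul_nonpos_of_nonneg_of_nonpos (rpow_nonneg (ht0.trans ht.1).le _)
    (div_nonpos_of_nonpos_of_nonneg (mul_nonpos_of_nonpos_of_nonneg
      (mul_nonpos_of_nonpos_of_nonneg hc2 (sq_nonneg t)) (sq_nonneg _)) (by positivity))

theorem deriv_lt_of_lyapunov_le {t K : ℝ} (ht : 0 < t) (hf : 0 < f t) (hlm : lm < 0)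
    (h : lyapunov lm lp f t ≤ K) : deriv f t < K * t ^ (lp - 1) * (1 + f t) ^ 2 := by
  have hw : 0 < -lm * (f t / (1 + f t)) := mul_pos (neg_pos.2 hlm) (by positivity)
  have htp : 0 < t ^ (-lp) := rpow_pos_of_pos ht _
  have hK : t * (deriv f t / (1 + f t) ^ 2) < K * t ^ lp := by
    unfold lyapunov at h
    rw [← le_div_iff₀' htp, rpow_neg ht.le, div_inv_eq_mul] at h
    linarith
  rw [← lt_div_iff₀' ht] at hK
  rw [rpow_sub_one ht.ne']
  calc deriv f t = deriv f t / (1 + f t) ^ 2 * (1 + f t) ^ 2 := by field_simp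
    _ < K * (t ^ lp / t) * (1 + f t) ^ 2 := by rw [← mul_div_assoc]; gcongr

end ODE

theorem stmt_7_general
    (t0 t1 a b c fi fi0 abar delta BB : ℝ) (f : ℝ → ℝ)
    (ht0 : 0 < t0)
    (hb : 0 < b) (hc' : c < 3 / 2)
    (hfi : 0 < fi) (hfi0 : 0 < fi0)
    (habar : abar = 1 - a)
    (hdelta : delta = Real.sqrt ((1 - a) ^ 2 + 4 * b))
    (hBB : BB = t0 ^ (-((abar + delta) / 2)) / delta *
      ((abar - delta) / 2 * (fi / (1 + fi)) - t0 * fi0 / (1 + fi) ^ 2))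
    (hreg : ContDiffOn ℝ 2 f (Set.Ico t0 t1))
    (hode : ∀ t ∈ Set.Ico t0 t1,
      deriv (deriv f) t + (a / t) * deriv f t
        - (b / t ^ 2) * f t * (1 + f t)
        - (c / (1 + f t)) * (deriv f t) ^ 2 = 0)
    (hft0 : f t0 = fi) (hft0' : deriv f t0 = fi0) :
    ∀ t ∈ Set.Ioo t0 t1,
      0 < deriv f t ∧
      deriv f t < -BB * delta * t ^ ((delta + abar) / 2 - 1) * (1 + f t) ^ 2 := by
  intro t ht
  have ht0_mem : t0 ∈ Ico t0 t1 := ⟨le_rfl, ht.1.trans ht.2⟩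
  have hode' := fun s (hs : s ∈ Ioo t0 t1) => hode s (Ioo_subset_Ico_self hs)
  have hpos := deriv_pos_of_ode ht0 hb hreg (hft0 ▸ hfi) (hft0' ▸ hfi0) hode'
  have hmono : MonotoneOn f (Ico t0 t1) := monotoneOn_of_contDiffOn_of_deriv_nonneg
    (convex_Ico t0 t1) (hreg.of_le one_le_two) fun s hs => (hpos s hs).le
  have hfpos : ∀ s ∈ Ico t0 t1, 0 < f s := fun s hs =>
    (hft0 ▸ hfi).trans_le (hmono ht0_mem hs hs.1)
  have hdelta_sq : delta ^ 2 = abar ^ 2 + 4 * b := by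
    rw [hdelta, sq_sqrt (by positivity), habar]
  have hdelta_pos : 0 < delta := hdelta ▸ sqrt_pos.2 (by positivity)
  have hanti := antitoneOn_lyapunov (lm := (abar - delta) / 2) (lp := (abar + delta) / 2) ht0
    (by linarith) (by rw [habar]; ring) (by linear_combination -hdelta_sq / 4) hreg
    (differentiableAt_of_deriv_ne_zero (hft0' ▸ hfi0.ne')) (fun s hs => by linarith [hfpos s hs])
    hode'
  have hlyapunov_t0 : lyapunov ((abar - delta) / 2) ((abar + delta) / 2) f t0 = -BB * delta := by
    unfold lyapunov
    rw [hft0, hft0', hBB]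
    field_simp
    ring
  refine ⟨hpos t (Ioo_subset_Ico_self ht), ?_⟩
  rw [add_comm delta abar]
  exact deriv_lt_of_lyapunov_le (ht0.trans ht.1) (hfpos t (Ioo_subset_Ico_self ht))
    (by nlinarith) (hlyapunov_t0 ▸ hanti ht0_mem (Ioo_subset_Ico_self ht) ht.1.le)

/-- If `f ∈ C²([t0,t1))` solves the ODE with the given initial data, then
for every `t ∈ (t0,t1)` the derivative `f0 = f'` satisfies
`0 < f0(t) < −𝙱 △ t^((△+ā)/2 − 1) (1+f(t))²`. -/
theorem stmt_7
    (t0 t1 a b c fi fi0 abar delta BB : ℝ) (f : ℝ → ℝ)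
    (ht0 : 0 < t0) (ht01 : t0 < t1)
    (ha : 1 < a) (hb : 0 < b) (hc : 1 < c) (hc' : c < 3 / 2)
    (hfi : 0 < fi) (hfi0 : 0 < fi0)
    (habar : abar = 1 - a)
    (hdelta : delta = Real.sqrt ((1 - a) ^ 2 + 4 * b))
    (hBB : BB = t0 ^ (-((abar + delta) / 2)) / delta *
      ((abar - delta) / 2 * (fi / (1 + fi)) - t0 * fi0 / (1 + fi) ^ 2))
    (hreg : ContDiffOn ℝ 2 f (Set.Ico t0 t1))
    (hode : ∀ t ∈ Set.Ico t0 t1,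
      deriv (deriv f) t + (a / t) * deriv f t
        - (b / t ^ 2) * f t * (1 + f t)
        - (c / (1 + f t)) * (deriv f t) ^ 2 = 0)
    (hft0 : f t0 = fi) (hft0' : deriv f t0 = fi0) :
    ∀ t ∈ Set.Ioo t0 t1,
      0 < deriv f t ∧
      deriv f t < -BB * delta * t ^ ((delta + abar) / 2 - 1) * (1 + f t) ^ 2 :=
  stmt_7_general t0 t1 a b c fi fi0 abar delta BB f ht0 hb hc' hfi hfi0 habar hdelta hBB hreg hode
    hft0 hft0'
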